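/- arXiv:1806.06251 — 4 statements merged into one kernel-verified Lean document; each statement's English description precedes it below -/
import Mathlib

section
/- Let G be a finite group, let 𝒟 be a collection of G, and let S be a basic collection of G. Then for every F ∈ 𝒟 there exists exactly one H ∈ S such that F ∈ S_𝒟(H). In other words, the sets S_𝒟(H) for H ∈ S form a partition of 𝒟 (some of the parts possibly empty). -/
/-! The members of `S` below `F` form a finite family containing `⊥` and closed under `⊔`,
so their join is again such a member: it is the greatest one, hence the unique maximal one. -/

theorem Set.Finite.isGreatest_finsetSup_id {α : Type*} [SemilatticeSup α] [OrderBot α]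
    {T : Set α} (hT : T.Finite) (hbot : ⊥ ∈ T) (hsup : ∀ a ∈ T, ∀ b ∈ T, a ⊔ b ∈ T) :
    IsGreatest T (hT.toFinset.sup id) :=
  ⟨Finset.sup_mem T hbot hsup _ id fun _ ↦ hT.mem_toFinset.1,
    fun _ ha ↦ Finset.le_sup (f := id) (hT.mem_toFinset.2 ha)⟩

theorem IsGreatest.existsUnique_maximal {α : Type*} [PartialOrder α] {T : Set α} {a : α}
    (h : IsGreatest T a) : ∃! x, Maximal (· ∈ T) x :=
  ⟨a, h.maximal, fun _ hx ↦ h.maximal_iff.1 hx⟩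

theorem stmt_4_general {G : Type*} [Group G] [Finite G]
    (𝒟 S : Set (Subgroup G))
    (hS_bot : ⊥ ∈ S)
    (hS_sup : ∀ H ∈ S, ∀ K ∈ S, H ⊔ K ∈ S) :
    ∀ F ∈ 𝒟, ∃! H : Subgroup G,
      H ∈ S ∧ H ≤ F ∧ ∀ H' ∈ S, H ≤ H' → H' ≤ F → H' = H := by
  intro F _
  have hgreatest := (Set.toFinite {K | K ∈ S ∧ K ≤ F}).isGreatest_finsetSup_id ⟨hS_bot, bot_le⟩
    fun H hH K hK ↦ ⟨hS_sup H hH.1 K hK.1, sup_le hH.2 hK.2⟩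
  convert hgreatest.existsUnique_maximal using 2 with H
  simp only [maximal_iff, Set.mem_ofPred_eq, and_imp, and_assoc, eq_comm, imp.swap (a := _ ≤ F)]

/-- Let `G` be a finite group, `𝒟` a collection of `G` and `S` a basic collection
of `G`. Then for every `F ∈ 𝒟` there is exactly one `H ∈ S` with `F ∈ S_𝒟(H)`, where
`S_𝒟(H) = {F ∈ 𝒟 : H ≤ F, and every H' ∈ S with H ≤ H' ≤ F equals H}`. -/
theorem stmt_4 {G : Type*} [Group G] [Finite G]
    (𝒟 S : Set (Subgroup G))
    (h_top : ⊤ ∈ 𝒟)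
    (h_inf : ∀ H ∈ 𝒟, ∀ K ∈ 𝒟, H ⊓ K ∈ 𝒟)
    (h_conj : ∀ H ∈ 𝒟, ∀ g : G, H.map (MulAut.conj g).toMonoidHom ∈ 𝒟)
    (hS_bot : ⊥ ∈ S)
    (hS_norm : ∀ H ∈ S, H.Normal)
    (hS_sup : ∀ H ∈ S, ∀ K ∈ S, H ⊔ K ∈ S) :
    ∀ F ∈ 𝒟, ∃! H : Subgroup G,
      H ∈ S ∧ H ≤ F ∧ ∀ H' ∈ S, H ≤ H' → H' ≤ F → H' = H :=
  stmt_4_general 𝒟 S hS_bot hS_sup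
end

section
/- Let G be a finite group, let 𝒟 be a collection of G, and let S be a basic collection of G. Let H₁, H₂ ∈ S, let F₁ ∈ S_𝒟(H₁) and F₂ ∈ S_𝒟(H₂), and let g ∈ G. Then H₁ ∩ H₂ ≤ gF₁g⁻¹ ∩ F₂, and every H' ∈ S with H' ≤ gF₁g⁻¹ ∩ F₂ satisfies H' ≤ H₁ ∩ H₂. -/
theorem le_of_sup_mem_of_unique_between {α : Type*} [SemilatticeSup α] {S : Set α}
    {H F H' : α} (hsup : H' ⊔ H ∈ S) (hHF : H ≤ F) (hH'F : H' ≤ F)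
    (hunique : ∀ K ∈ S, H ≤ K → K ≤ F → K = H) : H' ≤ H :=
  hunique _ hsup le_sup_right (sup_le hH'F hHF) ▸ le_sup_left

namespace Subgroup.Normal

variable {G : Type*} [Group G] {N F : Subgroup G} [N.Normal]

theorem le_map_conj_of_le (g : G) (h : N ≤ F) : N ≤ F.map (MulAut.conj g).toMonoidHom :=
  (map_conj_eq N g).symm.trans_le (map_mono h)

theorem le_of_le_map_conj {g : G} (h : N ≤ F.map (MulAut.conj g).toMonoidHom) : N ≤ F :=
  (map_le_map_iff_of_injective (f := (MulAut.conj g).toMonoidHom)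
    (MulAut.conj g).injective).mp ((map_conj_eq N g).trans_le h)

end Subgroup.Normal

theorem stmt_5_general {G : Type*} [Group G]
    (𝒟 S : Set (Subgroup G))
    (hS_norm : ∀ H ∈ S, H.Normal)
    (hS_sup : ∀ H ∈ S, ∀ K ∈ S, H ⊔ K ∈ S)
    (H₁ H₂ : Subgroup G) (hH₁ : H₁ ∈ S) (hH₂ : H₂ ∈ S)
    (F₁ F₂ : Subgroup G)
    (hF₁ : F₁ ∈ 𝒟 ∧ H₁ ≤ F₁ ∧ ∀ H' ∈ S, H₁ ≤ H' → H' ≤ F₁ → H' = H₁)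
    (hF₂ : F₂ ∈ 𝒟 ∧ H₂ ≤ F₂ ∧ ∀ H' ∈ S, H₂ ≤ H' → H' ≤ F₂ → H' = H₂)
    (g : G) :
    H₁ ⊓ H₂ ≤ F₁.map (MulAut.conj g).toMonoidHom ⊓ F₂ ∧
      ∀ H' ∈ S, H' ≤ F₁.map (MulAut.conj g).toMonoidHom ⊓ F₂ → H' ≤ H₁ ⊓ H₂ := by
  obtain ⟨-, hH₁F₁, hunique₁⟩ := hF₁
  obtain ⟨-, hH₂F₂, hunique₂⟩ := hF₂
  have := hS_norm H₁ hH₁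
  refine ⟨le_inf (inf_le_left.trans (Subgroup.Normal.le_map_conj_of_le g hH₁F₁))
    (inf_le_right.trans hH₂F₂), fun H' hH' hle => ?_⟩
  have := hS_norm H' hH'
  obtain ⟨hH'F₁g, hH'F₂⟩ := le_inf_iff.mp hle
  exact le_inf
    (le_of_sup_mem_of_unique_between (hS_sup H' hH' H₁ hH₁) hH₁F₁
      (Subgroup.Normal.le_of_le_map_conj hH'F₁g) hunique₁)
    (le_of_sup_mem_of_unique_between (hS_sup H' hH' H₂ hH₂) hH₂F₂ hH'F₂ hunique₂)

/-- With `𝒟` a collection and `S` a basic collection of a finite group `G`,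
if `H₁, H₂ ∈ S`, `F₁ ∈ S_𝒟(H₁)`, `F₂ ∈ S_𝒟(H₂)` and `g ∈ G`, then
`H₁ ∩ H₂ ≤ gF₁g⁻¹ ∩ F₂` and every `H' ∈ S` with `H' ≤ gF₁g⁻¹ ∩ F₂` satisfies
`H' ≤ H₁ ∩ H₂`. -/
theorem stmt_5 {G : Type*} [Group G] [Finite G]
    (𝒟 S : Set (Subgroup G))
    (h_top : ⊤ ∈ 𝒟)
    (h_inf : ∀ H ∈ 𝒟, ∀ K ∈ 𝒟, H ⊓ K ∈ 𝒟)
    (h_conj : ∀ H ∈ 𝒟, ∀ g : G, H.map (MulAut.conj g).toMonoidHom ∈ 𝒟)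
    (hS_bot : ⊥ ∈ S)
    (hS_norm : ∀ H ∈ S, H.Normal)
    (hS_sup : ∀ H ∈ S, ∀ K ∈ S, H ⊔ K ∈ S)
    (H₁ H₂ : Subgroup G) (hH₁ : H₁ ∈ S) (hH₂ : H₂ ∈ S)
    (F₁ F₂ : Subgroup G)
    (hF₁ : F₁ ∈ 𝒟 ∧ H₁ ≤ F₁ ∧ ∀ H' ∈ S, H₁ ≤ H' → H' ≤ F₁ → H' = H₁)
    (hF₂ : F₂ ∈ 𝒟 ∧ H₂ ≤ F₂ ∧ ∀ H' ∈ S, H₂ ≤ H' → H' ≤ F₂ → H' = H₂)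
    (g : G) :
    H₁ ⊓ H₂ ≤ F₁.map (MulAut.conj g).toMonoidHom ⊓ F₂ ∧
      ∀ H' ∈ S, H' ≤ F₁.map (MulAut.conj g).toMonoidHom ⊓ F₂ → H' ≤ H₁ ⊓ H₂ :=
  stmt_5_general 𝒟 S hS_norm hS_sup H₁ H₂ hH₁ hH₂ F₁ F₂ hF₁ hF₂ g
end

section
/- Let G be a finite group, let 𝒟 be a collection of G, let S be a basic collection of G, and let H ∈ S. Then S_𝒟(H) is a closed family of subgroups of G; that is, F₁ ∩ F₂ ∈ S_𝒟(H) for all F₁, F₂ ∈ S_𝒟(H), and gFg⁻¹ ∈ S_𝒟(H) for all F ∈ S_𝒟(H) and g ∈ G. -/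
section SDFamily

variable {α : Type*}

/-- The family `S_𝒟(H)` of the paper. -/
def sdFamily [Preorder α] (𝒟 S : Set α) (H : α) : Set α :=
  {F ∈ 𝒟 | H ≤ F ∧ ∀ H' ∈ S, H ≤ H' → H' ≤ F → H' = H}

theorem inf_mem_sdFamily [SemilatticeInf α] {𝒟 S : Set α} {H F₁ F₂ : α}
    (h_inf : ∀ A ∈ 𝒟, ∀ B ∈ 𝒟, A ⊓ B ∈ 𝒟)
    (hF₁ : F₁ ∈ sdFamily 𝒟 S H) (hF₂ : F₂ ∈ sdFamily 𝒟 S H) :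
    F₁ ⊓ F₂ ∈ sdFamily 𝒟 S H :=
  ⟨h_inf F₁ hF₁.1 F₂ hF₂.1, le_inf hF₁.2.1 hF₂.2.1,
    fun H' hH' hHH' hH'F => hF₁.2.2 H' hH' hHH' (hH'F.trans inf_le_left)⟩

theorem map_mem_sdFamily [Preorder α] {𝒟 S : Set α} {H F : α} (e : α ≃o α)
    (he𝒟 : ∀ A ∈ 𝒟, e A ∈ 𝒟) (heS : ∀ K ∈ S, e K = K) (hH : H ∈ S)
    (hF : F ∈ sdFamily 𝒟 S H) : e F ∈ sdFamily 𝒟 S H := by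
  obtain ⟨hF𝒟, hHF, hmin⟩ := hF
  refine ⟨he𝒟 F hF𝒟, heS H hH ▸ e.monotone hHF, fun H' hH' hHH' hH'F => ?_⟩
  rw [← heS H' hH', e.le_iff_le] at hH'F
  exact hmin H' hH' hHH' hH'F

end SDFamily

theorem Subgroup.Normal.mapSubgroup_conj_eq_self {G : Type*} [Group G] {N : Subgroup G}
    (hN : N.Normal) (g : G) : (MulAut.conj g).mapSubgroup N = N :=
  hN.conj_smul_eq_self g N

theorem stmt_6_general {G : Type*} [Group G]
    (𝒟 S : Set (Subgroup G))
    (h_inf : ∀ H ∈ 𝒟, ∀ K ∈ 𝒟, H ⊓ K ∈ 𝒟)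
    (h_conj : ∀ H ∈ 𝒟, ∀ g : G, H.map (MulAut.conj g).toMonoidHom ∈ 𝒟)
    (hS_norm : ∀ H ∈ S, H.Normal)
    (H : Subgroup G) (hH : H ∈ S) :
    let SD : Set (Subgroup G) :=
      {F ∈ 𝒟 | H ≤ F ∧ ∀ H' ∈ S, H ≤ H' → H' ≤ F → H' = H}
    (∀ F₁ ∈ SD, ∀ F₂ ∈ SD, F₁ ⊓ F₂ ∈ SD) ∧
      (∀ F ∈ SD, ∀ g : G, F.map (MulAut.conj g).toMonoidHom ∈ SD) :=
  ⟨fun _ hF₁ _ hF₂ => inf_mem_sdFamily h_inf hF₁ hF₂,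
    fun _ hF g => map_mem_sdFamily (MulAut.conj g).mapSubgroup (fun A hA => h_conj A hA g)
      (fun K hK => (hS_norm K hK).mapSubgroup_conj_eq_self g) hH hF⟩

/-- With `𝒟` a collection and `S` a basic collection of a finite group `G`,
for every `H ∈ S` the family `S_𝒟(H)` is a closed family of subgroups of `G`:
it is closed under intersection and under conjugation. -/
theorem stmt_6 {G : Type*} [Group G] [Finite G]
    (𝒟 S : Set (Subgroup G))
    (h_top : ⊤ ∈ 𝒟)
    (h_inf : ∀ H ∈ 𝒟, ∀ K ∈ 𝒟, H ⊓ K ∈ 𝒟)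
    (h_conj : ∀ H ∈ 𝒟, ∀ g : G, H.map (MulAut.conj g).toMonoidHom ∈ 𝒟)
    (hS_bot : ⊥ ∈ S)
    (hS_norm : ∀ H ∈ S, H.Normal)
    (hS_sup : ∀ H ∈ S, ∀ K ∈ S, H ⊔ K ∈ S)
    (H : Subgroup G) (hH : H ∈ S) :
    let SD : Set (Subgroup G) :=
      {F ∈ 𝒟 | H ≤ F ∧ ∀ H' ∈ S, H ≤ H' → H' ≤ F → H' = H}
    (∀ F₁ ∈ SD, ∀ F₂ ∈ SD, F₁ ⊓ F₂ ∈ SD) ∧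
      (∀ F ∈ SD, ∀ g : G, F.map (MulAut.conj g).toMonoidHom ∈ SD) :=
  stmt_6_general 𝒟 S h_inf h_conj hS_norm H hH
end

section
/- Let H be a finite group of odd order and let E be a finite 2-group. Then the direct product G = H × E is 2-seminilpotent; that is, for every subgroup K of G whose index [G:K] is even, there exists a normal subgroup N of G with K ≤ N and [G:N] = 2, and the number of normal subgroups N of G with K ≤ N and [G:N] = 2 is odd. -/
/-!
The image of `K` in the 2-group `E` is proper, since otherwise `[G:K]` would divide the odd
number `|H|`. A proper subgroup of a finite `p`-group lies in a subgroup of index `p`, whose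
preimage in `G` has index 2 and contains `K`.

For the count, the subgroups of index 2 containing `K` are exactly the kernels of the nontrivial
homomorphisms `G → ℤ/2` vanishing on `K`. These homomorphisms form a group of exponent 2, hence
of order `2 ^ r`, with `r ≥ 1` as soon as one such subgroup exists; so there are `2 ^ r - 1`.
-/

open Subgroup

theorem IsPGroup.exists_le_index_eq_of_ne_top {p : ℕ} [Fact p.Prime] {E : Type*} [Group E]
    [Finite E] (hE : IsPGroup p E) {P : Subgroup E} (hP : P ≠ ⊤) :
    ∃ M : Subgroup E, P ≤ M ∧ M.index = p := by
  obtain ⟨n, hn⟩ := hE.exists_card_eq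
  obtain ⟨m, hm⟩ := (hE.to_subgroup P).exists_card_eq
  have hmn : m < n := by
    refine lt_of_le_of_ne ?_ fun h => hP (P.eq_top_of_card_eq (by rw [hm, hn, h]))
    exact (Nat.pow_dvd_pow_iff_le_right (Fact.out : p.Prime).one_lt).mp
      (hm ▸ hn ▸ P.card_subgroup_dvd_card)
  obtain ⟨M, hM, hPM⟩ := Sylow.exists_subgroup_card_pow_prime_le p
    (hn ▸ pow_dvd_pow p (n.sub_le 1)) P hm (Nat.le_sub_one_of_lt hmn)
  refine ⟨M, hPM, Nat.eq_of_mul_eq_mul_left (pow_pos (Fact.out : p.Prime).pos (n - 1)) ?_⟩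
  rw [← hM, card_mul_index, hn, hM, ← pow_succ, Nat.sub_add_cancel (by omega)]

theorem Subgroup.map_snd_ne_top_of_dvd_index {p : ℕ} {H E : Type*} [Group H] [Group E]
    [Finite E] (hH : ¬p ∣ Nat.card H) {K : Subgroup (H × E)} (hK : p ∣ K.index) :
    K.map (MonoidHom.snd H E) ≠ ⊤ := by
  intro htop
  have hsurj : Function.Surjective ((MonoidHom.snd H E).comp K.subtype) := by
    rw [← MonoidHom.range_eq_top, MonoidHom.range_comp, range_subtype, htop]
  obtain ⟨t, ht⟩ := card_dvd_of_surjective _ hsurj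
  have hcard : Nat.card E * (t * K.index) = Nat.card E * Nat.card H := by
    rw [← mul_assoc, ← ht, card_mul_index, Nat.card_prod, mul_comm]
  exact hH (hK.trans (Dvd.intro_left t (Nat.eq_of_mul_eq_mul_left Nat.card_pos hcard)))

theorem Subgroup.exists_le_index_eq_of_dvd_index_prod {p : ℕ} [Fact p.Prime] {H E : Type*}
    [Group H] [Group E] [Finite E] (hH : ¬p ∣ Nat.card H) (hE : IsPGroup p E)
    {K : Subgroup (H × E)} (hK : p ∣ K.index) :
    ∃ N : Subgroup (H × E), K ≤ N ∧ N.index = p := by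
  obtain ⟨M, hKM, hM⟩ := hE.exists_le_index_eq_of_ne_top (map_snd_ne_top_of_dvd_index hH hK)
  have hsurj : Function.Surjective (MonoidHom.snd H E) := fun e => ⟨(1, e), rfl⟩
  exact ⟨M.comap _, map_le_iff_le_comap.mp hKM, (index_comap_of_surjective M hsurj).trans hM⟩

section ZModTwo

variable {G : Type*} [Group G]

theorem MonoidHom.eq_of_ker_eq_zmodTwo {φ ψ : G →* Multiplicative (ZMod 2)}
    (h : φ.ker = ψ.ker) : φ = ψ := by
  have values : ∀ a b : Multiplicative (ZMod 2), (a = 1 ↔ b = 1) → a = b := by decide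
  ext x
  exact congrArg _ (values _ _ (by simpa only [MonoidHom.mem_ker] using SetLike.ext_iff.mp h x))

theorem MonoidHom.index_ker_eq_two_of_ne_one {φ : G →* Multiplicative (ZMod 2)} (hφ : φ ≠ 1) :
    φ.ker.index = 2 := by
  have hrange : φ.range ≠ ⊥ := fun h => hφ (MonoidHom.range_eq_bot_iff.mp h)
  rw [Subgroup.index_ker]
  have hdvd : Nat.card φ.range ∣ 2 := by
    simpa using Subgroup.card_subgroup_dvd_card φ.range
  rcases Nat.prime_two.eq_one_or_self_of_dvd _ hdvd with h | h
  · exact absurd (Subgroup.card_eq_one.mp h) hrange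
  · exact h

theorem Subgroup.exists_ker_eq_of_index_eq_two {N : Subgroup G} (hN : N.index = 2) :
    ∃ φ : G →* Multiplicative (ZMod 2), φ.ker = N := by
  have := normal_of_index_eq_two hN
  let e : G ⧸ N ≃* Multiplicative (ZMod 2) := mulEquivOfPrimeCardEq hN (by simp)
  exact ⟨(e : G ⧸ N →* Multiplicative (ZMod 2)).comp (QuotientGroup.mk' N), by
    rw [MonoidHom.ker_mulEquiv_comp, QuotientGroup.ker_mk']⟩

theorem MonoidHom.isPGroup_zmodTwo : IsPGroup 2 (G →* Multiplicative (ZMod 2)) := by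
  have sq : ∀ a : Multiplicative (ZMod 2), a ^ 2 = 1 := by decide
  exact fun φ => ⟨1, MonoidHom.ext fun x => sq (φ x)⟩

end ZModTwo

theorem MonoidHom.mem_ker_compHom'_subtype {G P : Type*} [Group G] [CommGroup P]
    {K : Subgroup G} {φ : G →* P} : φ ∈ (MonoidHom.compHom' K.subtype).ker ↔ K ≤ φ.ker := by
  simp [SetLike.le_def, DFunLike.ext_iff]

instance MonoidHom.finite {M N : Type*} [MulOneClass M] [MulOneClass N] [Finite M] [Finite N] :
    Finite (M →* N) :=
  Finite.of_injective _ DFunLike.coe_injective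

section Counting

variable {G : Type*} [Group G] [Finite G]

theorem Subgroup.card_index_two_supergroups_add_one (K : Subgroup G) :
    Nat.card {N : Subgroup G // N.Normal ∧ K ≤ N ∧ N.index = 2} + 1 =
      Nat.card (MonoidHom.compHom' (P := Multiplicative (ZMod 2)) K.subtype).ker := by
  classical
  set D := (MonoidHom.compHom' (P := Multiplicative (ZMod 2)) K.subtype).ker
  let kerOf : {φ : D // φ ≠ 1} → {N : Subgroup G // N.Normal ∧ K ≤ N ∧ N.index = 2} :=
    fun φ =>
      have hidx := MonoidHom.index_ker_eq_two_of_ne_one fun h => φ.2 (Subtype.ext h)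
      ⟨φ.1.1.ker, normal_of_index_eq_two hidx, MonoidHom.mem_ker_compHom'_subtype.mp φ.1.2, hidx⟩
  have hkerOf : Function.Bijective kerOf := by
    refine ⟨fun φ ψ h => ?_, fun ⟨N, _, hKN, hN⟩ => ?_⟩
    · exact Subtype.ext <| Subtype.ext <| MonoidHom.eq_of_ker_eq_zmodTwo (congrArg Subtype.val h)
    · obtain ⟨φ, rfl⟩ := N.exists_ker_eq_of_index_eq_two hN
      refine ⟨⟨⟨φ, MonoidHom.mem_ker_compHom'_subtype.mpr hKN⟩, fun h => ?_⟩, rfl⟩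
      have : φ = 1 := congrArg Subtype.val h
      simp [this] at hN
  rw [← Nat.card_congr (Equiv.ofBijective kerOf hkerOf),
    ← Nat.card_congr (Equiv.optionSubtypeNe (1 : D)), Finite.card_option]

theorem Subgroup.odd_card_index_two_supergroups {K : Subgroup G}
    (h : ∃ N : Subgroup G, K ≤ N ∧ N.index = 2) :
    Odd (Nat.card {N : Subgroup G // N.Normal ∧ K ≤ N ∧ N.index = 2}) := by
  set D := (MonoidHom.compHom' (P := Multiplicative (ZMod 2)) K.subtype).ker
  obtain ⟨N, hKN, hN⟩ := h
  have hD : 1 < Nat.card D := by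
    rw [← K.card_index_two_supergroups_add_one, Nat.lt_add_left_iff_pos, Nat.card_pos_iff]
    exact ⟨⟨⟨N, normal_of_index_eq_two hN, hKN, hN⟩⟩, inferInstance⟩
  obtain ⟨r, hr0, hr⟩ := ((MonoidHom.isPGroup_zmodTwo.to_subgroup D).nontrivial_iff_card).mp
    (Finite.one_lt_card_iff_nontrivial.mp hD)
  have heven : Even (Nat.card D) := hr ▸ (Nat.even_pow.mpr ⟨even_two, hr0.ne'⟩)
  rwa [← K.card_index_two_supergroups_add_one, Nat.even_add_one, Nat.not_even_iff_odd] at heven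

end Counting

/-- If `H` is a finite group of odd order and `E` is a finite 2-group, then
`G = H × E` is 2-seminilpotent: for every subgroup `K` of `G` with `[G:K]` even, there is a
normal subgroup `N` of `G` with `K ≤ N` and `[G:N] = 2`, and the number of such normal
subgroups is odd. -/
theorem stmt_10 {H E : Type*} [Group H] [Group E] [Finite H] [Finite E]
    (hH : Odd (Nat.card H)) (hE : ∃ n : ℕ, Nat.card E = 2 ^ n)
    (K : Subgroup (H × E)) (hK : Even K.index) :
    (∃ N : Subgroup (H × E), N.Normal ∧ K ≤ N ∧ N.index = 2) ∧
      Odd (Nat.card {N : Subgroup (H × E) // N.Normal ∧ K ≤ N ∧ N.index = 2}) := by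
  obtain ⟨N, hKN, hN⟩ := exists_le_index_eq_of_dvd_index_prod hH.not_two_dvd_nat
    (IsPGroup.iff_card.mpr hE) (even_iff_two_dvd.mp hK)
  exact ⟨⟨N, normal_of_index_eq_two hN, hKN, hN⟩, odd_card_index_two_supergroups ⟨N, hKN, hN⟩⟩
end
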